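/- Let B be a left exact comonad on a complete category C (B commutes with all small limits). If X_• is a para-cyclic object in C such that each X_n carries a B-comodule structure ρ_n : X_n → B(X_n) compatible with faces and degeneracies (but not necessarily with the cyclic operators), then defining X_n^B as the limit over m ∈ ℕ of the equalizers of the pairs (ρ_n ∘ τ_n^m, B(τ_n^m) ∘ ρ_n), the cyclic operators τ_n restrict to X_n^B, i.e. there exist unique morphisms τ_n^B : X_n^B → X_n^B with η_n ∘ τ_n^B = τ_n ∘ η_n, where η_n : X_n^B → X_n is the canonical morphism. -/

import Mathlib

open CategoryTheory Simplicial

/-- A para-cyclic object in a category `C`. -/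
structure Paracyclic (C : Type*) [Category C] where
  X : SimplicialObject C
  τ : ∀ n : ℕ, X _⦋n⦌ ⟶ X _⦋n⦌
  δτ_succ : ∀ (n : ℕ) (i : Fin (n + 1)),
    τ (n + 1) ≫ X.δ i.succ = X.δ i.castSucc ≫ τ n
  δτ_zero : ∀ n : ℕ, τ (n + 1) ≫ X.δ 0 = X.δ (Fin.last (n + 1))
  στ_succ : ∀ (n : ℕ) (i : Fin n),
    τ n ≫ X.σ i.succ = X.σ i.castSucc ≫ τ (n + 1)
  στ_zero : ∀ n : ℕ, τ n ≫ X.σ 0 = X.σ (Fin.last n) ≫ τ (n + 1) ≫ τ (n + 1)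

/-- `τ_n^k`. -/
def Paracyclic.τpow {C : Type*} [Category C] (P : Paracyclic C) (n : ℕ) :
    ℕ → (P.X _⦋n⦌ ⟶ P.X _⦋n⦌) := fun m => match m with
  | 0 => 𝟙 _
  | k + 1 => P.τ n ≫ P.τpow n k

namespace Paracyclic

variable {C : Type*} [Category C] (P : Paracyclic C)

lemma τpow_succ (n m : ℕ) : P.τpow n (m + 1) = P.τ n ≫ P.τpow n m := rfl

lemma τpow_one (n : ℕ) : P.τpow n 1 = P.τ n := Category.comp_id _

/-- `X_n^B` is the universal object with a map to `X_n` satisfying this. -/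
def EqualizesCoactionPowers {F : C ⥤ C} {n : ℕ} (ρ : P.X _⦋n⦌ ⟶ F.obj (P.X _⦋n⦌))
    {Z : C} (f : Z ⟶ P.X _⦋n⦌) : Prop :=
  ∀ m : ℕ, f ≫ P.τpow n m ≫ ρ = f ≫ ρ ≫ F.map (P.τpow n m)

variable {P}

/-- The condition for `m + 1` on `f` is the condition for `m` on `f ≫ τ_n`, once the
condition for `m = 1` lets `ρ` pass through the first `τ_n`. -/
lemma EqualizesCoactionPowers.comp_τ {F : C ⥤ C} {n : ℕ}
    {ρ : P.X _⦋n⦌ ⟶ F.obj (P.X _⦋n⦌)} {Z : C} {f : Z ⟶ P.X _⦋n⦌}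
    (hf : P.EqualizesCoactionPowers ρ f) : P.EqualizesCoactionPowers ρ (f ≫ P.τ n) := by
  have hτ : f ≫ P.τ n ≫ ρ = f ≫ ρ ≫ F.map (P.τ n) := by
    simpa only [τpow_one] using hf 1
  intro m
  calc (f ≫ P.τ n) ≫ P.τpow n m ≫ ρ
      = f ≫ P.τpow n (m + 1) ≫ ρ := by rw [τpow_succ, Category.assoc, Category.assoc]
    _ = f ≫ ρ ≫ F.map (P.τ n) ≫ F.map (P.τpow n m) := by
      rw [hf (m + 1), τpow_succ, F.map_comp]
    _ = (f ≫ P.τ n) ≫ ρ ≫ F.map (P.τpow n m) := by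
      rw [Category.assoc, reassoc_of% hτ]

end Paracyclic

theorem cyclic_operator_restricts_general {C : Type*} [Category C]
    (B : Comonad C)
    (P : Paracyclic C)
    (ρ : ∀ n : ℕ, P.X _⦋n⦌ ⟶ B.obj (P.X _⦋n⦌))
    (L : ℕ → C) (η : ∀ n : ℕ, L n ⟶ P.X _⦋n⦌)
    (hLeq : ∀ n m : ℕ,
      η n ≫ P.τpow n m ≫ ρ n = η n ≫ ρ n ≫ B.map (P.τpow n m))
    (hLuniv : ∀ (n : ℕ) (Z : C) (f : Z ⟶ P.X _⦋n⦌),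
      (∀ m : ℕ, f ≫ P.τpow n m ≫ ρ n = f ≫ ρ n ≫ B.map (P.τpow n m)) →
      ∃! g : Z ⟶ L n, g ≫ η n = f) :
    ∀ n : ℕ, ∃! tB : L n ⟶ L n, tB ≫ η n = η n ≫ P.τ n := fun n =>
  hLuniv n (L n) (η n ≫ P.τ n)
    (Paracyclic.EqualizesCoactionPowers.comp_τ (hLeq n))

/-- let `B` be a left exact comonad on a complete category `C`
and `X_•` a para-cyclic object whose levels carry `B`-comodule structures
`ρ_n` compatible with faces and degeneracies (a pseudo-para-cyclic
`B`-comodule).  If `η_n : X_n^B ⟶ X_n` is the limit over `m ∈ ℕ` of the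
equalizers of the pairs `(ρ_n ∘ τ_n^m, B(τ_n^m) ∘ ρ_n)` (characterized here by
its universal property), then the cyclic operators restrict: there is a unique
`τ_n^B : X_n^B ⟶ X_n^B` with `η_n ∘ τ_n^B = τ_n ∘ η_n`. -/
theorem cyclic_operator_restricts {C : Type*} [Category C]
    [Limits.HasLimits C] (B : Comonad C)
    [Limits.PreservesLimits B.toFunctor]
    (P : Paracyclic C)
    (ρ : ∀ n : ℕ, P.X _⦋n⦌ ⟶ B.obj (P.X _⦋n⦌))
    (hcounit : ∀ n, ρ n ≫ B.ε.app _ = 𝟙 _)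
    (hcoassoc : ∀ n, ρ n ≫ B.δ.app _ = ρ n ≫ B.map (ρ n))
    (hδ : ∀ (n : ℕ) (i : Fin (n + 2)),
      P.X.δ i ≫ ρ n = ρ (n + 1) ≫ B.map (P.X.δ i))
    (hσ : ∀ (n : ℕ) (i : Fin (n + 1)),
      P.X.σ i ≫ ρ (n + 1) = ρ n ≫ B.map (P.X.σ i))
    (L : ℕ → C) (η : ∀ n : ℕ, L n ⟶ P.X _⦋n⦌)
    (hLeq : ∀ n m : ℕ,
      η n ≫ P.τpow n m ≫ ρ n = η n ≫ ρ n ≫ B.map (P.τpow n m))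
    (hLuniv : ∀ (n : ℕ) (Z : C) (f : Z ⟶ P.X _⦋n⦌),
      (∀ m : ℕ, f ≫ P.τpow n m ≫ ρ n = f ≫ ρ n ≫ B.map (P.τpow n m)) →
      ∃! g : Z ⟶ L n, g ≫ η n = f) :
    ∀ n : ℕ, ∃! tB : L n ⟶ L n, tB ≫ η n = η n ≫ P.τ n :=
  cyclic_operator_restricts_general B P ρ L η hLeq hLuniv
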